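/- For every n ≥ 0, the sum over all integer partitions μ of the squares (f̃^μ_n)² of the numbers of oscillating tableaux of shape μ and length n equals (2n−1)!! = (2n−1)(2n−3)⋯3·1 (with the convention (−1)!! = 1). (Only partitions μ of n−2r for 0 ≤ r ≤ ⌊n/2⌋ contribute.) -/

import Mathlib

open scoped BigOperators

/-- A function `ℕ → ℕ` represents an integer partition if it is weakly decreasing and
eventually zero (the value at `i` is the length of row `i` of the Young diagram). -/
def IsPartFun (f : ℕ → ℕ) : Prop :=
  (∀ i j : ℕ, i ≤ j → f j ≤ f i) ∧ ∃ N, ∀ i, N ≤ i → f i = 0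

/-- The Young diagram of `g` is obtained from that of `f` by adding exactly one square. -/
def AddBox (f g : ℕ → ℕ) : Prop :=
  ∃ i, g = Function.update f i (f i + 1)

/-- `T` is an oscillating tableau of length `n`: a sequence `∅ = μ⁰, μ¹, …, μⁿ` of
partitions in which consecutive diagrams differ by adding or removing one square. -/
def IsOscTab (n : ℕ) (T : Fin (n + 1) → ℕ → ℕ) : Prop :=
  (∀ k, IsPartFun (T k)) ∧ T 0 = (fun _ => 0) ∧
    ∀ k : Fin n, AddBox (T k.castSucc) (T k.succ) ∨ AddBox (T k.succ) (T k.castSucc)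

/-!
Young's lattice is a differential poset: writing `U` and `D` for the operators sending a shape to
the sum of the shapes covering it, resp. covered by it, one has `DU - UD = I`: a shape has one
more addable than removable box, and two distinct shapes have a common upper cover (necessarily
their join) iff they have a common lower cover (necessarily their meet). Two oscillating
tableaux of the same shape glue, the second one reversed, into a closed walk of length `2n` from `∅`
in the Hasse diagram. Commuting `D` through `(U + D) ^ (m + 1)` gives
`D (U + D) ^ (m + 1) ∅ = (m + 1) (U + D) ^ m ∅`, so the numbers `w m` of closed walks of length `m`
satisfy `w (m + 2) = (m + 1) w m`, whence `w (2n) = (2n - 1)!!`. Every count is realised by an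
explicit equivalence of types, so no finiteness argument is needed.
-/

open Function Relation
open scoped Nat

def natSubtypeEquivOption {P : ℕ → Prop} (h0 : P 0) : {i // P i} ≃ Option {i // P (i + 1)} where
  toFun | ⟨0, _⟩ => none | ⟨i + 1, h⟩ => some ⟨i, h⟩
  invFun | none => ⟨0, h0⟩ | some i => ⟨i.1 + 1, i.2⟩
  left_inv | ⟨0, _⟩ => rfl | ⟨_ + 1, _⟩ => rfl
  right_inv | none => rfl | some _ => rfl

section Walks

variable {α : Type*}

def sigmaProdPLiftEquiv (F : α → Type*) (c : α) : (Σ b, F b × PLift (c = b)) ≃ F c where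
  toFun x := x.2.2.down ▸ x.2.1
  invFun y := ⟨c, y, ⟨rfl⟩⟩
  left_inv := by rintro ⟨b, y, ⟨rfl⟩⟩; rfl
  right_inv _ := rfl

def sigmaSubtypeSigmaEquiv (P : α → Prop) (Q : α → α → Prop) (F : α → Type*) :
    (Σ ν : {ν // P ν}, Σ ρ : {ρ // Q ρ ν}, F ρ) ≃ Σ ρ, F ρ × {ν // P ν ∧ Q ρ ν} where
  toFun x := ⟨x.2.1, x.2.2, x.1, x.1.2, x.2.1.2⟩
  invFun y := ⟨⟨y.2.2, y.2.2.2.1⟩, ⟨y.1, y.2.2.2.2⟩, y.2.1⟩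
  left_inv _ := rfl
  right_inv _ := rfl

@[ext]
structure RelWalk (R : α → α → Prop) (n : ℕ) (a b : α) where
  toFun : Fin (n + 1) → α
  toFun_zero : toFun 0 = a
  toFun_last : toFun (Fin.last n) = b
  rel_succ : ∀ k : Fin n, R (toFun k.castSucc) (toFun k.succ)

namespace RelWalk

variable {R : α → α → Prop}

theorem heq_of_toFun_eq {n : ℕ} {a b b' : α} {p : RelWalk R n a b} {q : RelWalk R n a b'}
    (h : p.toFun = q.toFun) : p ≍ q := by
  obtain rfl : b = b' := p.toFun_last.symm.trans (h ▸ q.toFun_last)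
  exact heq_of_eq (RelWalk.ext h)

def zeroEquiv (a b : α) : RelWalk R 0 a b ≃ PLift (a = b) where
  toFun T := ⟨T.toFun_zero.symm.trans T.toFun_last⟩
  invFun h := ⟨fun _ => a, rfl, h.down, fun k => k.elim0⟩
  left_inv T := RelWalk.ext <| funext fun k => by rw [Fin.fin_one_eq_zero k, T.toFun_zero]
  right_inv _ := rfl

def snocEquiv (n : ℕ) (a c : α) :
    RelWalk R (n + 1) a c ≃ Σ b : {b // R b c}, RelWalk R n a b where
  toFun T := ⟨⟨T.toFun (Fin.last n).castSucc,
      by simpa [T.toFun_last] using T.rel_succ (Fin.last n)⟩,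
    Fin.init T.toFun, T.toFun_zero, rfl, fun k => T.rel_succ k.castSucc⟩
  invFun x := ⟨Fin.snoc x.2.toFun c,
    by rw [← Fin.castSucc_zero, Fin.snoc_castSucc]; exact x.2.toFun_zero,
    Fin.snoc_last _ _,
    fun k => by
      induction k using Fin.lastCases with
      | last => simpa [x.2.toFun_last] using x.1.2
      | cast k =>
        rw [Fin.succ_castSucc, Fin.snoc_castSucc, Fin.snoc_castSucc]
        exact x.2.rel_succ k⟩
  left_inv T := RelWalk.ext <| by simpa [T.toFun_last] using Fin.snoc_init_self T.toFun
  right_inv x := Sigma.ext (Subtype.ext <| by simpa using x.2.toFun_last)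
    (heq_of_toFun_eq (Fin.init_snoc (α := fun _ => α) _ _))

def sigmaProdEquiv [Std.Symm R] (a c : α) :
    ∀ n k : ℕ, (Σ b, RelWalk R n a b × RelWalk R k c b) ≃ RelWalk R (n + k) a c
  | n, 0 => calc
      (Σ b, RelWalk R n a b × RelWalk R 0 c b) ≃ Σ b, RelWalk R n a b × PLift (c = b) :=
        Equiv.sigmaCongrRight fun b => Equiv.prodCongr (Equiv.refl _) (zeroEquiv c b)
      _ ≃ RelWalk R n a c := sigmaProdPLiftEquiv _ c
  | n, k + 1 => calc
      (Σ b, RelWalk R n a b × RelWalk R (k + 1) c b)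
          ≃ Σ b, RelWalk R n a b × Σ b' : {b' // R b' b}, RelWalk R k c b' :=
        Equiv.sigmaCongrRight fun b => Equiv.prodCongr (Equiv.refl _) (snocEquiv k c b)
      _ ≃ Σ b', (Σ b : {b // R b b'}, RelWalk R n a b) × RelWalk R k c b' :=
        { toFun := fun x => ⟨x.2.2.1, ⟨⟨x.1, symm x.2.2.1.2⟩, x.2.1⟩, x.2.2.2⟩
          invFun := fun y => ⟨y.2.1.1, y.2.1.2, ⟨y.1, symm y.2.1.1.2⟩, y.2.2⟩
          left_inv := fun _ => rfl
          right_inv := fun _ => rfl }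
      _ ≃ Σ b', RelWalk R (n + 1) a b' × RelWalk R k c b' :=
        Equiv.sigmaCongrRight fun b' => Equiv.prodCongr (snocEquiv n a b').symm (Equiv.refl _)
      _ ≃ RelWalk R (n + 1 + k) a c := sigmaProdEquiv a c (n + 1) k
      _ ≃ RelWalk R (n + (k + 1)) a c := Equiv.cast (by rw [Nat.add_right_comm]; rfl)

variable {C : α → α → Prop}

open scoped Classical in
noncomputable def symmGenSuccEquiv (hasymm : ∀ x y, C x y → ¬ C y x) (m : ℕ) (a f : α) :
    RelWalk (SymmGen C) (m + 1) a f ≃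
      (Σ ν : {ν // C ν f}, RelWalk (SymmGen C) m a ν) ⊕
        Σ ν : {ν // C f ν}, RelWalk (SymmGen C) m a ν :=
  (snocEquiv m a f).trans <|
    (Equiv.sigmaCongrLeft' (β := fun ν => RelWalk (SymmGen C) m a ν.1)
      (subtypeOrEquiv (C · f) (C f ·)
        (disjoint_iff_inf_le.2 fun _ h => hasymm _ _ h.1 h.2))).trans (Equiv.sumSigmaDistrib _)

end RelWalk

/-- Stanley's axiom `DU - UD = I` for a cover relation `C`, in bijective form; `PLift (x = y)` is
the Kronecker delta. -/
def IsDifferential (C : α → α → Prop) : Prop :=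
  ∀ x y, Nonempty ({z // C x z ∧ C y z} ≃ {z // C z x ∧ C z y} ⊕ PLift (x = y))

namespace IsDifferential

variable {C : α → α → Prop} (hdiff : IsDifferential C)
  (hasymm : ∀ x y, C x y → ¬ C y x) {o : α} (hbot : ∀ x, ¬ C x o)

noncomputable def downUpEquiv (f : α) (F : α → Type*) :
    (Σ ν : {ν // C f ν}, Σ ρ : {ρ // C ρ ν}, F ρ) ≃
      (Σ ν : {ν // C ν f}, Σ ρ : {ρ // C ν ρ}, F ρ) ⊕ F f := calc
  _ ≃ Σ ρ, F ρ × {ν // C f ν ∧ C ρ ν} := sigmaSubtypeSigmaEquiv _ _ F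
  _ ≃ Σ ρ, F ρ × ({ν // C ν f ∧ C ν ρ} ⊕ PLift (f = ρ)) :=
    Equiv.sigmaCongrRight fun ρ => Equiv.prodCongr (Equiv.refl _) (hdiff f ρ).some
  _ ≃ (Σ ρ, F ρ × {ν // C ν f ∧ C ν ρ}) ⊕ Σ ρ, F ρ × PLift (f = ρ) :=
    (Equiv.sigmaCongrRight fun _ => Equiv.prodSumDistrib _ _ _).trans (Equiv.sigmaSumDistrib _ _)
  _ ≃ _ := Equiv.sumCongr (sigmaSubtypeSigmaEquiv (C · f) (fun ρ ν => C ν ρ) F).symm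
    (sigmaProdPLiftEquiv F f)

noncomputable def walksAboveSuccEquiv (m : ℕ) (f : α) :
    (Σ ν : {ν // C f ν}, RelWalk (SymmGen C) (m + 1) o ν) ≃
      ((Σ ν : {ν // C ν f}, Σ ρ : {ρ // C ν ρ}, RelWalk (SymmGen C) m o ρ) ⊕
        Σ ν : {ν // C f ν}, Σ ρ : {ρ // C ν ρ}, RelWalk (SymmGen C) m o ρ) ⊕
        RelWalk (SymmGen C) m o f :=
  (Equiv.sigmaCongrRight fun ν : {ν // C f ν} => RelWalk.symmGenSuccEquiv hasymm m o ν.1).trans <|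
    (Equiv.sigmaSumDistrib _ _).trans <|
      (Equiv.sumCongr (hdiff.downUpEquiv f _) (Equiv.refl _)).trans <|
        (Equiv.sumAssoc _ _ _).trans <| (Equiv.sumCongr (Equiv.refl _) (Equiv.sumComm _ _)).trans
          (Equiv.sumAssoc _ _ _).symm

/-- `D (U + D) ^ (m + 1) δ_o = (m + 1) (U + D) ^ m δ_o`. -/
noncomputable def walksAboveEquiv : ∀ (m : ℕ) (f : α),
    (Σ ν : {ν // C f ν}, RelWalk (SymmGen C) (m + 1) o ν) ≃
      RelWalk (SymmGen C) m o f × Fin (m + 1)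
  | 0, f =>
    have (P : α → Prop) :
        IsEmpty (Σ ν : {ν // P ν}, Σ ρ : {ρ // C ν ρ}, RelWalk (SymmGen C) 0 o ρ) :=
      ⟨fun ⟨ν, ρ, w⟩ => hbot ν ((RelWalk.zeroEquiv o ρ w).down ▸ ρ.2)⟩
    (hdiff.walksAboveSuccEquiv hasymm 0 f).trans <| (Equiv.emptySum _ _).trans
      (Equiv.prodUnique _ (Fin 1)).symm
  | m + 1, f => calc
    _ ≃ ((Σ ν : {ν // C ν f}, RelWalk (SymmGen C) m o ν × Fin (m + 1)) ⊕
          Σ ν : {ν // C f ν}, RelWalk (SymmGen C) m o ν × Fin (m + 1)) ⊕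
          RelWalk (SymmGen C) (m + 1) o f :=
      (hdiff.walksAboveSuccEquiv hasymm (m + 1) f).trans <| Equiv.sumCongr
        (Equiv.sumCongr (Equiv.sigmaCongrRight fun ν => walksAboveEquiv m ν)
          (Equiv.sigmaCongrRight fun ν => walksAboveEquiv m ν))
        (Equiv.refl _)
    _ ≃ (RelWalk (SymmGen C) (m + 1) o f × Fin (m + 1)) ⊕ RelWalk (SymmGen C) (m + 1) o f :=
      Equiv.sumCongr
        ((Equiv.sumCongr (Equiv.sigmaProdDistrib _ _).symm (Equiv.sigmaProdDistrib _ _).symm).trans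
          ((Equiv.sumProdDistrib _ _ _).symm.trans
            (Equiv.prodCongr (RelWalk.symmGenSuccEquiv hasymm m o f).symm (Equiv.refl _))))
        (Equiv.refl _)
    _ ≃ RelWalk (SymmGen C) (m + 1) o f × Fin (m + 2) :=
      (Equiv.sumCongr (Equiv.refl _) (Equiv.prodUnique _ (Fin 1)).symm).trans <|
        (Equiv.prodSumDistrib _ _ _).symm.trans (Equiv.prodCongr (Equiv.refl _) finSumFinEquiv)

noncomputable def closedWalkSuccSuccEquiv (m : ℕ) :
    RelWalk (SymmGen C) (m + 2) o o ≃ RelWalk (SymmGen C) m o o × Fin (m + 1) :=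
  have : IsEmpty {ν // C ν o} := ⟨fun ν => hbot ν.1 ν.2⟩
  (RelWalk.symmGenSuccEquiv hasymm (m + 1) o o).trans <|
    (Equiv.emptySum _ _).trans (hdiff.walksAboveEquiv hasymm hbot m o)

end IsDifferential

theorem IsDifferential.card_closedWalk_two_mul {C : α → α → Prop} (hdiff : IsDifferential C)
    (hasymm : ∀ x y, C x y → ¬ C y x) {o : α} (hbot : ∀ x, ¬ C x o) (n : ℕ) :
    Nat.card (RelWalk (SymmGen C) (2 * n) o o) = (2 * n - 1)‼ := by
  induction n with
  | zero => simp [Nat.card_congr (RelWalk.zeroEquiv (R := SymmGen C) o o)]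
  | succ n ih =>
    rw [Nat.mul_succ, Nat.card_congr (hdiff.closedWalkSuccSuccEquiv hasymm hbot _), Nat.card_prod,
      ih, Nat.card_eq_fintype_card, Fintype.card_fin]
    rcases n with _ | n
    · rfl
    · rw [show 2 * (n + 1) + 2 - 1 = 2 * n + 1 + 2 by omega, Nat.doubleFactorial_add_two,
        show 2 * (n + 1) - 1 = 2 * n + 1 by omega]
      ring

end Walks

theorem AddBox.lt {f g : ℕ → ℕ} (h : AddBox f g) : f < g := by
  obtain ⟨i, rfl⟩ := h
  refine lt_of_le_of_ne (le_update_self_iff.2 (Nat.le_succ _)) fun h => ?_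
  simpa using congrFun h i

/-- Pointwise, `max a b - a = b - min a b`. -/
theorem addBox_sup_iff {x y : ℕ → ℕ} : AddBox x (x ⊔ y) ↔ AddBox (x ⊓ y) y := by
  constructor <;> rintro ⟨i, h⟩ <;> refine ⟨i, funext fun k => ?_⟩ <;> have := congrFun h k <;>
    simp only [update_apply, Pi.sup_apply, Pi.inf_apply] at * <;> split_ifs at * with hk <;>
    subst_vars <;> omega

theorem addBox_sup_iff' {x y : ℕ → ℕ} : AddBox y (x ⊔ y) ↔ AddBox (x ⊓ y) x := by
  rw [sup_comm, inf_comm]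
  exact addBox_sup_iff

theorem AddBox.eq_sup {x y z : ℕ → ℕ} (hne : x ≠ y) (hx : AddBox x z) (hy : AddBox y z) :
    z = x ⊔ y := by
  obtain ⟨j, rfl⟩ := hx
  obtain ⟨i, hi⟩ := hy
  have hij : i ≠ j := by
    rintro rfl
    refine hne (funext fun k => ?_)
    have := congrFun hi k
    simp only [update_apply] at this
    split_ifs at this with hk <;> subst_vars <;> omega
  funext k
  have := congrFun hi k
  simp only [update_apply, Pi.sup_apply] at *
  split_ifs at * <;> subst_vars <;> omega

theorem AddBox.eq_inf {x y w : ℕ → ℕ} (hne : x ≠ y) (hx : AddBox w x) (hy : AddBox w y) :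
    w = x ⊓ y := by
  obtain ⟨j, rfl⟩ := hx
  obtain ⟨i, rfl⟩ := hy
  have hij : i ≠ j := by rintro rfl; exact hne rfl
  funext k
  simp only [update_apply, Pi.inf_apply]
  split_ifs <;> subst_vars <;> omega

theorem IsPartFun.inf {x y : ℕ → ℕ} (hx : IsPartFun x) (hy : IsPartFun y) :
    IsPartFun (x ⊓ y) := by
  obtain ⟨hx, N, hN⟩ := hx
  exact ⟨fun i j h => inf_le_inf (hx i j h) (hy.1 i j h), N, fun i hi => by simp [hN i hi]⟩

theorem IsPartFun.sup {x y : ℕ → ℕ} (hx : IsPartFun x) (hy : IsPartFun y) :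
    IsPartFun (x ⊔ y) := by
  obtain ⟨hx, N, hN⟩ := hx
  obtain ⟨hy, M, hM⟩ := hy
  exact ⟨fun i j h => sup_le_sup (hx i j h) (hy i j h), max N M,
    fun i hi => by simp [hN i (le_of_max_le_left hi), hM i (le_of_max_le_right hi)]⟩

theorem IsPartFun.update {f : ℕ → ℕ} (hf : IsPartFun f) {i v : ℕ} (hsucc : f (i + 1) ≤ v)
    (hpred : ∀ j, j + 1 = i → v ≤ f j) : IsPartFun (update f i v) := by
  obtain ⟨hanti, N, hN⟩ := hf
  refine ⟨fun a b hab => antitone_nat_of_succ_le (fun k => ?_) hab, max N (i + 1),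
    fun k hk => ?_⟩
  · have := hanti k (k + 1) k.le_succ
    rcases eq_or_ne k i with rfl | hki
    · rwa [update_self, update_of_ne (by omega)]
    rcases eq_or_ne (k + 1) i with rfl | hki'
    · rw [update_self, update_of_ne hki]; exact hpred k rfl
    · rwa [update_of_ne hki, update_of_ne hki']
  · rw [update_of_ne (by omega)]; exact hN k (by omega)

abbrev PartFun : Type := {f : ℕ → ℕ // IsPartFun f}

namespace PartFun

def empty : PartFun := ⟨fun _ => 0, fun _ _ _ => le_rfl, 0, fun _ _ => rfl⟩

def Cov (x y : PartFun) : Prop := AddBox x.1 y.1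

theorem cov_asymm (x y : PartFun) (hxy : Cov x y) : ¬ Cov y x :=
  fun hyx => lt_asymm hxy.lt hyx.lt

theorem not_cov_empty (x : PartFun) : ¬ Cov x empty :=
  fun h => h.lt.not_ge fun _ => Nat.zero_le _

theorem isPartFun_update_add_one_iff (x : PartFun) (i : ℕ) :
    IsPartFun (update x.1 (i + 1) (x.1 (i + 1) + 1)) ↔ x.1 (i + 1) < x.1 i := by
  refine ⟨fun h => ?_,
    fun h => x.2.update ((x.2.1 _ _ (by omega)).trans (Nat.le_succ _)) fun j hj => ?_⟩
  · simpa using h.1 i (i + 1) i.le_succ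
  · cases hj; exact h

noncomputable def addRowsEquiv (x : PartFun) :
    {i // IsPartFun (update x.1 i (x.1 i + 1))} ≃ {z : PartFun // Cov x z} :=
  Equiv.ofBijective (fun i => ⟨⟨_, i.2⟩, i.1, rfl⟩) <| by
    refine ⟨fun i j h => Subtype.ext ?_,
      fun ⟨z, i, hi⟩ => ⟨⟨i, hi ▸ z.2⟩, by ext1; ext1; exact hi.symm⟩⟩
    by_contra hij
    simpa [update_of_ne hij] using congrFun (congrArg (·.1.1) h) i.1

noncomputable def removeRowsEquiv (x : PartFun) :
    {i // x.1 (i + 1) < x.1 i} ≃ {z : PartFun // Cov z x} :=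
  Equiv.ofBijective
    (fun i => ⟨⟨_, x.2.update (Nat.le_sub_one_of_lt i.2)
      fun j hj => (Nat.sub_le _ _).trans (x.2.1 j i.1 (by omega))⟩, i.1, by
        simp only [update_self, Nat.sub_add_cancel (Nat.zero_lt_of_lt i.2), update_idem,
          update_eq_self]⟩) <| by
    refine ⟨fun i j h => Subtype.ext ?_, fun ⟨z, i, hi⟩ => ⟨⟨i, ?_⟩, ?_⟩⟩
    · by_contra hij
      have hxi := congrFun (congrArg (·.1.1) h) i.1
      simp only [update_self, update_of_ne hij] at hxi
      have := i.2
      omega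
    · rw [hi, update_self, update_of_ne (by omega)]
      exact Nat.lt_succ_of_le (z.2.1 i (i + 1) i.le_succ)
    · refine Subtype.ext (Subtype.ext ?_)
      change update x.1 i (x.1 i - 1) = z.1
      rw [hi, update_idem, update_self, Nat.add_sub_cancel, update_eq_self]

/-- A box can always be added in row `0`, and in row `i + 1` exactly when one can be removed
from row `i`. -/
noncomputable def coversEquivOption (x : PartFun) :
    {z // Cov x z} ≃ Option {z // Cov z x} :=
  (addRowsEquiv x).symm.trans <|
    (natSubtypeEquivOption (x.2.update ((x.2.1 0 1 zero_le_one).trans (Nat.le_succ _))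
      fun j hj => absurd hj j.succ_ne_zero)).trans <|
    Equiv.optionCongr <|
      (Equiv.subtypeEquivRight (isPartFun_update_add_one_iff x)).trans (removeRowsEquiv x)

noncomputable def commonCoversEquiv {x y : PartFun} (hne : x ≠ y) :
    {z // Cov x z ∧ Cov y z} ≃ {w // Cov w x ∧ Cov w y} :=
  have hne : x.1 ≠ y.1 := fun h => hne (Subtype.ext h)
  have : Subsingleton {z // Cov x z ∧ Cov y z} := ⟨fun z z' => Subtype.ext <| Subtype.ext <|
    (AddBox.eq_sup hne z.2.1 z.2.2).trans (AddBox.eq_sup hne z'.2.1 z'.2.2).symm⟩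
  have : Subsingleton {w // Cov w x ∧ Cov w y} := ⟨fun w w' => Subtype.ext <| Subtype.ext <|
    (AddBox.eq_inf hne w.2.1 w.2.2).trans (AddBox.eq_inf hne w'.2.1 w'.2.2).symm⟩
  equivOfSubsingletonOfSubsingleton
    (fun ⟨z, hx, hy⟩ => by
      have hz := AddBox.eq_sup hne hx hy
      rw [Cov, hz] at hx hy
      exact ⟨⟨_, x.2.inf y.2⟩, addBox_sup_iff'.1 hy, addBox_sup_iff.1 hx⟩)
    (fun ⟨w, hx, hy⟩ => by
      have hw := AddBox.eq_inf hne hx hy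
      rw [Cov, hw] at hx hy
      exact ⟨⟨_, x.2.sup y.2⟩, addBox_sup_iff.2 hy, addBox_sup_iff'.2 hx⟩)

theorem isDifferential_cov : IsDifferential Cov := by
  intro x y
  rcases eq_or_ne x y with rfl | hne
  · exact ⟨(Equiv.subtypeEquivRight fun _ => and_self_iff).trans <| (coversEquivOption x).trans <|
      (Equiv.optionEquivSumPUnit.{0} _).trans <|
        Equiv.sumCongr (Equiv.subtypeEquivRight fun _ => and_self_iff.symm)
          (equivOfSubsingletonOfSubsingleton (fun _ => ⟨rfl⟩) fun _ => ⟨⟩)⟩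
  · have : IsEmpty (PLift (x = y)) := ⟨fun h => hne h.down⟩
    exact ⟨(commonCoversEquiv hne).trans (Equiv.sumEmpty _ _).symm⟩

def _root_.IsOscTab.toRelWalk {n : ℕ} {T : Fin (n + 1) → ℕ → ℕ} (hT : IsOscTab n T) {μ : PartFun}
    (hμ : T (Fin.last n) = μ.1) : RelWalk (SymmGen Cov) n empty μ :=
  ⟨fun k => ⟨T k, hT.1 k⟩, Subtype.ext hT.2.1, Subtype.ext hμ, hT.2.2⟩

theorem _root_.RelWalk.isOscTab_val {n : ℕ} {μ : PartFun} (w : RelWalk (SymmGen Cov) n empty μ) :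
    IsOscTab n fun k => (w.toFun k).1 :=
  ⟨fun k => (w.toFun k).2, congrArg Subtype.val w.toFun_zero, w.rel_succ⟩

def oscPairsEquiv (n : ℕ) :
    {PQ : (Fin (n + 1) → ℕ → ℕ) × (Fin (n + 1) → ℕ → ℕ) //
        IsOscTab n PQ.1 ∧ IsOscTab n PQ.2 ∧ PQ.1 (Fin.last n) = PQ.2 (Fin.last n)} ≃
      Σ μ : PartFun, RelWalk (SymmGen Cov) n empty μ × RelWalk (SymmGen Cov) n empty μ where
  toFun PQ := ⟨⟨_, PQ.2.1.1 (Fin.last n)⟩, PQ.2.1.toRelWalk rfl, PQ.2.2.1.toRelWalk PQ.2.2.2.symm⟩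
  invFun x := ⟨(fun k => (x.2.1.toFun k).1, fun k => (x.2.2.toFun k).1),
    x.2.1.isOscTab_val, x.2.2.isOscTab_val,
    congrArg Subtype.val (x.2.1.toFun_last.trans x.2.2.toFun_last.symm)⟩
  left_inv _ := rfl
  right_inv := by
    rintro ⟨μ, ⟨P, _, rfl, _⟩, _⟩
    rfl

end PartFun

/-- `Σ_μ (f̃^μ_n)² = (2n-1)!!` : the number of pairs of oscillating tableaux of
length `n` having the same (arbitrary) final shape equals `(2n-1)!!`. -/
theorem sum_sq_osc_tableaux (n : ℕ) :
    Nat.card {PQ : (Fin (n + 1) → ℕ → ℕ) × (Fin (n + 1) → ℕ → ℕ) //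
        IsOscTab n PQ.1 ∧ IsOscTab n PQ.2 ∧ PQ.1 (Fin.last n) = PQ.2 (Fin.last n)} =
      Nat.doubleFactorial (2 * n - 1) := by
  rw [Nat.card_congr ((PartFun.oscPairsEquiv n).trans (RelWalk.sigmaProdEquiv _ _ n n)), ← two_mul]
  exact PartFun.isDifferential_cov.card_closedWalk_two_mul PartFun.cov_asymm
    PartFun.not_cov_empty n
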